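/- Let g ∈ ℝ with g ≠ 0 and, for each of M workers, let G̃⁽ᵐ⁾ be independent real random variables with E[G̃⁽ᵐ⁾] = g, Var(G̃⁽ᵐ⁾) ≤ σ²/n_b, and with G̃⁽ᵐ⁾ − g having a distribution that is unimodal and symmetric about 0. Let S⁽ᵐ⁾ := sign(G̃⁽ᵐ⁾) and let the majority vote be S̄ := sign(Σ_{m=1}^{M} S⁽ᵐ⁾). Then P(S̄ ≠ sign(g)) ≤ (√6/2) · (1/√M) · σ / (√(n_b) · |g|). -/

import Mathlib

/-!
Put `v = σ² / n_b` and `ρ = |g| / √(g² + 6 v)`. Each vote `sign g · sign G̃⁽ᵐ⁾` has mean at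
least `ρ`. Indeed the noise `X = G̃⁽ᵐ⁾ - g` has a density `q`, even and nonincreasing on `[0, ∞)`.
With `τ = P(X ≥ t)`, `c = q t` and `A = τ + c t`, unimodality keeps the line `s ↦ A - c s` below
the tail `s ↦ P(X ≥ s)`; hence `A ≤ P(X > 0) ≤ 1/2` and, by the layer cake formula,
`v / 2 ≥ E[X₊²] ≥ A³ / (3 c²)`. Eliminating `A` and `c` gives the Gauss-type bound
`P(X ≥ t) ≤ (1 - t / √(t² + 6 v)) / 2`, which is used at `t = |g|`.

The votes are independent with values in `[-1, 1]`, so their sum has mean at least `M ρ` and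
variance at most `M (1 - ρ²)`. Cantelli's inequality together with `V / (V + e²) ≤ √V / (2 e)`
bounds the probability that the sum is not positive by `√(1 - ρ²) / (2 ρ √M)`, and
`(1 - ρ²) / ρ² = 6 v / g²`.
-/

open MeasureTheory ProbabilityTheory

/-- A distribution on `ℝ` is unimodal and symmetric about `0` if it has a density (w.r.t.
Lebesgue measure) that is symmetric about `0` and nonincreasing in `|x|`. -/
def UnimodalSymmetric (ν : Measure ℝ) : Prop :=
  ∃ p : ℝ → ENNReal, ν = MeasureTheory.volume.withDensity p ∧
    (∀ x : ℝ, p (-x) = p x) ∧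
    ∀ ⦃x y : ℝ⦄, 0 ≤ x → x ≤ y → p y ≤ p x

open Set
open scoped ENNReal

lemma Real.measurable_sign : Measurable Real.sign :=
  measurable_const.ite (measurableSet_lt measurable_id measurable_const) <|
    measurable_const.ite (measurableSet_lt measurable_const measurable_id) measurable_const

lemma Real.sign_mul_sign_mem_Icc (a b : ℝ) : Real.sign a * Real.sign b ∈ Icc (-1 : ℝ) 1 := by
  rcases Real.sign_apply_eq a with ha | ha | ha <;>
  rcases Real.sign_apply_eq b with hb | hb | hb <;> simp [ha, hb]

lemma Real.sign_mul_sign_of_mul_pos {a b : ℝ} (h : 0 < a * b) :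
    Real.sign a * Real.sign b = 1 := by
  rcases pos_and_pos_or_neg_and_neg_of_mul_pos h with ⟨ha, hb⟩ | ⟨ha, hb⟩
  · simp [Real.sign_of_pos ha, Real.sign_of_pos hb]
  · simp [Real.sign_of_neg ha, Real.sign_of_neg hb]

lemma Real.sign_ne_sign_iff {x g : ℝ} (hg : g ≠ 0) :
    Real.sign x ≠ Real.sign g ↔ Real.sign g * x ≤ 0 := by
  rcases hg.lt_or_gt with hg | hg <;>
  rcases lt_trichotomy x 0 with hx | hx | hx <;>
  simp [Real.sign_of_neg, Real.sign_of_pos, hg, hx, hx.le] <;> linarith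

section Concentration

variable {Ω : Type*} [MeasurableSpace Ω] {μ : Measure Ω} [IsProbabilityMeasure μ]

/-- **Cantelli's inequality**. -/
theorem measureReal_le_integral_sub_le {Y : Ω → ℝ} (hY : MemLp Y 2 μ) {l : ℝ} (hl : 0 < l) :
    μ.real {ω | Y ω ≤ μ[Y] - l} ≤ Var[Y; μ] / (Var[Y; μ] + l ^ 2) := by
  set V := Var[Y; μ]
  have hV : 0 ≤ V := variance_nonneg Y μ
  -- Markov's inequality for `(μ[Y] + u - Y)²`; the shift `u = V / l` optimises the bound.
  set u := V / l
  have hu : 0 ≤ u := div_nonneg hV hl.le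
  set W : Ω → ℝ := fun ω => μ[Y] + u - Y ω
  have hW : MemLp W 2 μ := (memLp_const _).sub hY
  have hEW2 : μ[fun ω => W ω ^ 2] = V + u ^ 2 := by
    have h := variance_eq_sub hW
    rw [variance_const_sub hY.aestronglyMeasurable, integral_sub (integrable_const _)
      (hY.integrable one_le_two), integral_const] at h
    simp only [probReal_univ, one_smul, add_sub_cancel_left, Pi.pow_apply] at h
    linarith
  have hsub : {ω | Y ω ≤ μ[Y] - l} ⊆ {ω | (l + u) ^ 2 ≤ W ω ^ 2} :=
    fun ω (hω : Y ω ≤ μ[Y] - l) => by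
      have : l + u ≤ W ω := by simp only [W]; linarith
      exact pow_le_pow_left₀ (by positivity) this 2
  have hmarkov := mul_meas_ge_le_integral_of_nonneg (ae_of_all μ fun ω => sq_nonneg (W ω))
    hW.integrable_sq ((l + u) ^ 2)
  calc μ.real {ω | Y ω ≤ μ[Y] - l} ≤ (V + u ^ 2) / (l + u) ^ 2 := by
        rw [le_div_iff₀ (by positivity), mul_comm, ← hEW2]
        exact (mul_le_mul_of_nonneg_left (measureReal_mono hsub) (by positivity)).trans hmarkov
    _ = V / (V + l ^ 2) := by
      simp only [u]
      field_simp
      ring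

lemma div_add_sq_le_sqrt_div {V e : ℝ} (hV : 0 ≤ V) (he : 0 < e) :
    V / (V + e ^ 2) ≤ √V / (2 * e) := by
  rw [div_le_div_iff₀ (by positivity) (by positivity)]
  nlinarith [mul_nonneg (Real.sqrt_nonneg V) (sq_nonneg (√V - e)), Real.sq_sqrt hV]

theorem measureReal_sum_nonpos_le {ι : Type*} [Fintype ι] [Nonempty ι] {X : ι → Ω → ℝ}
    (hX : ∀ i, AEMeasurable (X i) μ) (hbdd : ∀ i ω, X i ω ∈ Icc (-1 : ℝ) 1)
    (hindep : iIndepFun X μ) {ρ : ℝ} (hρ : 0 < ρ) (hmean : ∀ i, ρ ≤ μ[X i]) :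
    μ.real {ω | ∑ i, X i ω ≤ 0} ≤ √(1 - ρ ^ 2) / (2 * ρ * √(Fintype.card ι)) := by
  set n : ℝ := (Fintype.card ι : ℝ)
  have hn : 0 < n := by positivity
  have hL2 : ∀ i, MemLp (X i) 2 μ := fun i =>
    memLp_of_bounded (ae_of_all μ (hbdd i)) (hX i).aestronglyMeasurable 2
  set Y := ∑ i, X i
  have hEY : n * ρ ≤ μ[Y] := by
    simp_rw [Y, Finset.sum_apply]
    rw [integral_finsetSum _ fun i _ => (hL2 i).integrable one_le_two]
    calc n * ρ = ∑ _i : ι, ρ := by simp [n]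
      _ ≤ _ := Finset.sum_le_sum fun i _ => hmean i
  have hEYpos : 0 < μ[Y] := lt_of_lt_of_le (by positivity) hEY
  have hVY : Var[Y; μ] ≤ n * (1 - ρ ^ 2) := by
    rw [IndepFun.variance_sum (fun i _ => hL2 i) fun i _ j _ hij => hindep.indepFun hij]
    have hVi : ∀ i, Var[X i; μ] ≤ 1 - ρ ^ 2 := fun i => by
      nlinarith [hmean i, variance_le_sub_mul_sub (ae_of_all μ (hbdd i)) (hX i)]
    calc ∑ i, Var[X i; μ] ≤ ∑ _i : ι, (1 - ρ ^ 2) := Finset.sum_le_sum fun i _ => hVi i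
      _ = n * (1 - ρ ^ 2) := by simp [n]; ring
  have hevent : {ω | ∑ i, X i ω ≤ 0} = {ω | Y ω ≤ μ[Y] - μ[Y]} := by
    simp [Y, Finset.sum_apply]
  calc μ.real {ω | ∑ i, X i ω ≤ 0}
      ≤ Var[Y; μ] / (Var[Y; μ] + μ[Y] ^ 2) := by
        rw [hevent]
        exact measureReal_le_integral_sub_le (memLp_finsetSum' _ fun i _ => hL2 i) hEYpos
    _ ≤ √(Var[Y; μ]) / (2 * μ[Y]) := div_add_sq_le_sqrt_div (variance_nonneg Y μ) hEYpos
    _ ≤ √(n * (1 - ρ ^ 2)) / (2 * (n * ρ)) := by gcongr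
    _ = √(1 - ρ ^ 2) / (2 * ρ * √n) := by
      rw [Real.sqrt_mul hn.le]
      field_simp
      linear_combination √(1 - ρ ^ 2) * Real.mul_self_sqrt hn.le

end Concentration

section AntitoneDensity

variable {q : ℝ → ℝ≥0∞}

lemma mul_le_withDensity_Ioo (hq : AntitoneOn q (Ici 0)) {x y : ℝ} (hx : 0 ≤ x) :
    q y * ENNReal.ofReal (y - x) ≤ volume.withDensity q (Ioo x y) := by
  rw [withDensity_apply _ measurableSet_Ioo, ← Real.volume_Ioo, ← setLIntegral_const]
  exact setLIntegral_mono' measurableSet_Ioo fun z hz =>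
    hq (hx.trans hz.1.le) (hx.trans (hz.1.trans hz.2).le) hz.2.le

lemma withDensity_Ico_le_mul (hq : AntitoneOn q (Ici 0)) {x y : ℝ} (hx : 0 ≤ x) :
    volume.withDensity q (Ico x y) ≤ q x * ENNReal.ofReal (y - x) := by
  rw [withDensity_apply _ measurableSet_Ico, ← Real.volume_Ico, ← setLIntegral_const]
  exact setLIntegral_mono' measurableSet_Ico fun z hz => hq hx (hx.trans hz.1) hz.1

lemma withDensity_Ici_add_le_Ioi (hq : AntitoneOn q (Ici 0)) {s t : ℝ} (hs : 0 ≤ s)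
    (hst : s < t) :
    volume.withDensity q (Ici t) + q t * ENNReal.ofReal t
      ≤ volume.withDensity q (Ioi s) + q t * ENNReal.ofReal s := by
  set ν := volume.withDensity q
  have hsplit : ENNReal.ofReal t = ENNReal.ofReal (t - s) + ENNReal.ofReal s := by
    rw [← ENNReal.ofReal_add (sub_nonneg.2 hst.le) hs, sub_add_cancel]
  calc ν (Ici t) + q t * ENNReal.ofReal t
      = q t * ENNReal.ofReal (t - s) + ν (Ici t) + q t * ENNReal.ofReal s := by
        rw [hsplit, mul_add]; ring
    _ ≤ ν (Ioo s t) + ν (Ici t) + q t * ENNReal.ofReal s := by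
        gcongr; exact mul_le_withDensity_Ioo hq hs
    _ = ν (Ioi s) + q t * ENNReal.ofReal s := by
        rw [← measure_union ((Iio_disjoint_Ici le_rfl).mono_left Ioo_subset_Iio_self)
          measurableSet_Ici, Ioo_union_Ici_eq_Ioi hst]

lemma withDensity_Ici_add_le_Ici (hq : AntitoneOn q (Ici 0)) {s t : ℝ} (ht : 0 ≤ t)
    (hts : t ≤ s) :
    volume.withDensity q (Ici t) + q t * ENNReal.ofReal t
      ≤ volume.withDensity q (Ici s) + q t * ENNReal.ofReal s := by
  set ν := volume.withDensity q
  have hsplit : ENNReal.ofReal s = ENNReal.ofReal (s - t) + ENNReal.ofReal t := by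
    rw [← ENNReal.ofReal_add (sub_nonneg.2 hts) ht, sub_add_cancel]
  calc ν (Ici t) + q t * ENNReal.ofReal t
      ≤ ν (Ico t s) + ν (Ici s) + q t * ENNReal.ofReal t := by
        gcongr; rw [← Ico_union_Ici_eq_Ici hts]; exact measure_union_le _ _
    _ ≤ q t * ENNReal.ofReal (s - t) + ν (Ici s) + q t * ENNReal.ofReal t := by
        gcongr; exact withDensity_Ico_le_mul hq ht
    _ = ν (Ici s) + q t * ENNReal.ofReal s := by rw [hsplit, mul_add]; ring

lemma withDensity_Ici_add_le (hq : AntitoneOn q (Ici 0)) {s t : ℝ} (hs : 0 < s) (ht : 0 < t) :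
    volume.withDensity q (Ici t) + q t * ENNReal.ofReal t
      ≤ volume.withDensity q (Ici s) + q t * ENNReal.ofReal s := by
  rcases lt_or_ge s t with hst | hts
  · exact (withDensity_Ici_add_le_Ioi hq hs.le hst).trans (by gcongr; exact Ioi_subset_Ici_self)
  · exact withDensity_Ici_add_le_Ici hq ht.le hts

lemma isNegInvariant_withDensity (hq : ∀ x, q (-x) = q x) :
    (volume.withDensity q).IsNegInvariant := by
  refine ⟨Measure.ext fun s hs => ?_⟩
  rw [Measure.neg_def, Measure.map_apply measurable_neg hs,
    withDensity_apply _ (hs.preimage measurable_neg), withDensity_apply _ hs,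
    ← (Measure.measurePreserving_neg volume).setLIntegral_comp_preimage_emb
      measurableEmbedding_neg q s]
  simp only [hq]

end AntitoneDensity

section NegInvariant

variable (ν : Measure ℝ) [ν.IsNegInvariant]

lemma measureReal_Iic_neg (t : ℝ) : ν.real (Iic (-t)) = ν.real (Ici t) := by
  rw [← neg_Ici, measureReal_def, Measure.measure_neg, measureReal_def]

lemma two_mul_measure_Ioi_zero_le : 2 * ν (Ioi 0) ≤ ν univ := by
  have hIio : ν (Iio 0) = ν (Ioi 0) := by
    rw [← Measure.measure_neg, neg_Iio, neg_zero]
  calc 2 * ν (Ioi 0) = ν (Iio 0) + ν (Ioi 0) := by rw [hIio, two_mul]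
    _ = ν (Iio 0 ∪ Ioi 0) := (measure_union Ioi_disjoint_Iio_same.symm measurableSet_Ioi).symm
    _ ≤ ν univ := measure_mono (subset_univ _)

lemma two_mul_lintegral_max_sq :
    2 * ∫⁻ x, ENNReal.ofReal (max x 0 ^ 2) ∂ν = ∫⁻ x, ENNReal.ofReal (x ^ 2) ∂ν := by
  rw [two_mul]
  nth_rewrite 1 [← lintegral_neg_eq_self (μ := ν) fun x => ENNReal.ofReal (max x 0 ^ 2)]
  rw [← lintegral_add_left (by fun_prop)]
  refine lintegral_congr fun x => ?_
  rw [← ENNReal.ofReal_add (sq_nonneg _) (sq_nonneg _)]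
  rcases le_total x 0 with hx | hx <;> simp [hx]

lemma lintegral_max_sq_le_of_lintegral_sq_le {v : ℝ}
    (hv : ∫⁻ x, ENNReal.ofReal (x ^ 2) ∂ν ≤ ENNReal.ofReal v) :
    ∫⁻ x, ENNReal.ofReal (max x 0 ^ 2) ∂ν ≤ ENNReal.ofReal (v / 2) := by
  rw [← ENNReal.mul_le_mul_iff_right two_ne_zero ENNReal.ofNat_ne_top,
    two_mul_lintegral_max_sq, ← ENNReal.ofReal_ofNat 2, ← ENNReal.ofReal_mul zero_le_two]
  convert hv using 2
  ring

end NegInvariant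

lemma setLIntegral_Ioo_ofReal {f : ℝ → ℝ} (hf : Continuous f) {z : ℝ} (hz : 0 ≤ z)
    (hf0 : ∀ s ∈ Ioo 0 z, 0 ≤ f s) :
    ∫⁻ s in Ioo 0 z, ENNReal.ofReal (f s) = ENNReal.ofReal (∫ s in 0..z, f s) := by
  rw [intervalIntegral.integral_of_le hz, integral_Ioc_eq_integral_Ioo,
    ofReal_integral_eq_lintegral_ofReal (hf.integrableOn_Icc.mono_set Ioo_subset_Icc_self)
      ((ae_restrict_iff' measurableSet_Ioo).2 (ae_of_all _ hf0))]

lemma lintegral_max_sq_eq (ν : Measure ℝ) :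
    ∫⁻ x, ENNReal.ofReal (max x 0 ^ 2) ∂ν
      = ∫⁻ s in Ioi 0, ν (Ici s) * ENNReal.ofReal (2 * s) := by
  have h := lintegral_comp_eq_lintegral_meas_le_mul ν (f := fun x => max x 0)
    (g := fun s => 2 * s) (ae_of_all _ fun x => le_max_right x 0) (by fun_prop)
    (fun r _ => (continuous_const.mul continuous_id).intervalIntegrable 0 r)
    ((ae_restrict_iff' measurableSet_Ioi).2 (ae_of_all _ fun s (hs : 0 < s) => by positivity))
  convert h using 1
  · refine lintegral_congr fun x => ?_
    rw [intervalIntegral.integral_const_mul, integral_id]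
    ring_nf
  · refine setLIntegral_congr_fun measurableSet_Ioi fun s (hs : 0 < s) => ?_
    congr 2
    ext x
    simp [hs]

lemma mul_sq_le_lintegral_max_sq_add (ν : Measure ℝ) {A c : ℝ≥0∞}
    (h : ∀ s > 0, A ≤ ν (Ici s) + c * ENNReal.ofReal s) {z : ℝ} (hz : 0 ≤ z) :
    A * ENNReal.ofReal (z ^ 2)
      ≤ ∫⁻ x, ENNReal.ofReal (max x 0 ^ 2) ∂ν + c * ENNReal.ofReal (2 * z ^ 3 / 3) := by
  have h1 : ∫⁻ s in Ioo 0 z, ENNReal.ofReal (2 * s) = ENNReal.ofReal (z ^ 2) := by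
    rw [setLIntegral_Ioo_ofReal (by fun_prop) hz fun s hs => by linarith [hs.1],
      intervalIntegral.integral_const_mul, integral_id]
    ring_nf
  have h2 : ∫⁻ s in Ioo 0 z, ENNReal.ofReal (2 * s ^ 2) = ENNReal.ofReal (2 * z ^ 3 / 3) := by
    rw [setLIntegral_Ioo_ofReal (by fun_prop) hz fun s _ => by positivity,
      intervalIntegral.integral_const_mul, integral_pow]
    ring_nf
  calc A * ENNReal.ofReal (z ^ 2) = ∫⁻ s in Ioo 0 z, A * ENNReal.ofReal (2 * s) := by
        rw [lintegral_const_mul _ (by fun_prop), h1]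
    _ ≤ ∫⁻ s in Ioo 0 z,
          (ν (Ici s) * ENNReal.ofReal (2 * s) + c * ENNReal.ofReal (2 * s ^ 2)) := by
        refine setLIntegral_mono' measurableSet_Ioo fun s hs => ?_
        have hs2 : ENNReal.ofReal s * ENNReal.ofReal (2 * s) = ENNReal.ofReal (2 * s ^ 2) := by
          rw [← ENNReal.ofReal_mul hs.1.le]; ring_nf
        calc A * ENNReal.ofReal (2 * s)
            ≤ (ν (Ici s) + c * ENNReal.ofReal s) * ENNReal.ofReal (2 * s) := by
              gcongr; exact h s hs.1
          _ = _ := by rw [add_mul, mul_assoc, hs2]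
    _ = (∫⁻ s in Ioo 0 z, ν (Ici s) * ENNReal.ofReal (2 * s))
          + c * ENNReal.ofReal (2 * z ^ 3 / 3) := by
        rw [lintegral_add_right _ (by fun_prop), lintegral_const_mul _ (by fun_prop), h2]
    _ ≤ _ := by
        rw [lintegral_max_sq_eq]
        gcongr ?_ + _
        exact lintegral_mono_set Ioo_subset_Ioi_self

lemma two_mul_pow_three_le_of_forall {A c v : ℝ} (hA : 0 ≤ A) (hc : 0 ≤ c)
    (h : ∀ z, 0 ≤ z → A * z ^ 2 ≤ v / 2 + c * (2 * z ^ 3 / 3)) :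
    2 * A ^ 3 ≤ 3 * v * c ^ 2 := by
  rcases hc.eq_or_lt with rfl | hc
  · have hv : 0 ≤ v := by linarith [h 0 le_rfl]
    obtain rfl : A = 0 := by
      by_contra hA0
      have hApos : 0 < A := lt_of_le_of_ne hA (Ne.symm hA0)
      have hz : A * (v / A + 1) ^ 2 = (v + A) * (v / A + 1) := by field_simp
      have hz1 : (v + A) * 1 ≤ (v + A) * (v / A + 1) :=
        mul_le_mul_of_nonneg_left (le_add_of_nonneg_left (by positivity)) (by positivity)
      linarith [h (v / A + 1) (by positivity)]
    simp
  · have := h (A / c) (by positivity)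
    rw [div_pow, div_pow] at this
    field_simp at this
    nlinarith

lemma mul_one_sub_mul_sq_le {d e : ℝ} (hd : 0 ≤ d) (he : 0 ≤ e) (hde : d + e ≤ 1 / 2) :
    d * (1 - d) * e ^ 2 ≤ (d + e) ^ 3 * (1 - 2 * d) ^ 2 := by
  -- Expand `(d + e) ^ 3`, drop the terms in `d² e` and `e³`, and bound `d³ (1 - 2d)²` below by
  -- `4 d³ e²`: what remains is `d e² (16 d² - 11 d + 2) ≥ 0`.
  have hu : 4 * e ^ 2 ≤ (1 - 2 * d) ^ 2 := by nlinarith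
  have hq : 0 ≤ 16 * d ^ 2 - 11 * d + 2 := by nlinarith [sq_nonneg (d - 11 / 32)]
  nlinarith [mul_le_mul_of_nonneg_left hu (pow_nonneg hd 3),
    mul_nonneg (mul_nonneg hd (sq_nonneg e)) hq,
    mul_nonneg (mul_nonneg (sq_nonneg d) he) (sq_nonneg (1 - 2 * d)),
    mul_nonneg (pow_nonneg he 3) (sq_nonneg (1 - 2 * d))]

lemma le_one_sub_div_sqrt_div_two {τ c t v : ℝ} (hτ : 0 ≤ τ) (hc : 0 ≤ c) (ht : 0 < t)
    (hv : 0 ≤ v) (hhalf : τ + c * t ≤ 1 / 2) (hcube : 2 * (τ + c * t) ^ 3 ≤ 3 * v * c ^ 2) :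
    τ ≤ (1 - t / √(t ^ 2 + 6 * v)) / 2 := by
  have hr : 0 ≤ 1 - 2 * τ := by nlinarith
  have hkey : t ^ 2 ≤ (1 - 2 * τ) ^ 2 * (t ^ 2 + 6 * v) := by
    rcases hc.eq_or_lt with rfl | hc
    · obtain rfl : τ = 0 := by
        refine le_antisymm (not_lt.1 fun hτ' => ?_) hτ
        nlinarith [pow_pos hτ' 3]
      nlinarith
    · have hp := mul_one_sub_mul_sq_le hτ (by positivity : 0 ≤ c * t) hhalf
      have h : c ^ 2 * (t ^ 2 * (1 - (1 - 2 * τ) ^ 2))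
          ≤ c ^ 2 * (6 * v * (1 - 2 * τ) ^ 2) := by
        nlinarith [mul_le_mul_of_nonneg_right hcube (sq_nonneg (1 - 2 * τ))]
      nlinarith [le_of_mul_le_mul_left h (by positivity)]
  have hsqrt : t ≤ (1 - 2 * τ) * √(t ^ 2 + 6 * v) :=
    calc t = √(t ^ 2) := (Real.sqrt_sq ht.le).symm
      _ ≤ √((1 - 2 * τ) ^ 2 * (t ^ 2 + 6 * v)) := Real.sqrt_le_sqrt hkey
      _ = (1 - 2 * τ) * √(t ^ 2 + 6 * v) := by
        rw [Real.sqrt_mul (sq_nonneg _), Real.sqrt_sq hr]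
  have := (div_le_iff₀ (Real.sqrt_pos.2 (by positivity))).2 hsqrt
  linarith

lemma UnimodalSymmetric.isNegInvariant {ν : Measure ℝ} (hν : UnimodalSymmetric ν) :
    ν.IsNegInvariant := by
  obtain ⟨q, rfl, hsym, -⟩ := hν
  exact isNegInvariant_withDensity hsym

theorem UnimodalSymmetric.measureReal_Ici_le {ν : Measure ℝ} [IsProbabilityMeasure ν]
    (hν : UnimodalSymmetric ν) {t v : ℝ} (ht : 0 < t) (hv0 : 0 ≤ v)
    (hv : ∫⁻ x, ENNReal.ofReal (x ^ 2) ∂ν ≤ ENNReal.ofReal v) :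
    ν.real (Ici t) ≤ (1 - t / √(t ^ 2 + 6 * v)) / 2 := by
  have := hν.isNegInvariant
  obtain ⟨q, rfl, -, hmono⟩ := hν
  have hq : AntitoneOn q (Ici 0) := fun x hx _ _ hxy => hmono hx hxy
  set ν := volume.withDensity q
  have hhalf : 2 * (ν (Ici t) + q t * ENNReal.ofReal t) ≤ 1 := by
    have h := withDensity_Ici_add_le_Ioi hq le_rfl ht
    rw [ENNReal.ofReal_zero, mul_zero, add_zero] at h
    calc 2 * (ν (Ici t) + q t * ENNReal.ofReal t) ≤ 2 * ν (Ioi 0) := by gcongr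
      _ ≤ 1 := by simpa using two_mul_measure_Ioi_zero_le ν
  have hfin : q t ≠ ⊤ := by
    rintro hqt
    rw [hqt, ENNReal.top_mul (by simpa using ht)] at hhalf
    simp at hhalf
  set τ := ν.real (Ici t)
  set c := (q t).toReal
  have hA : ν (Ici t) + q t * ENNReal.ofReal t = ENNReal.ofReal (τ + c * t) := by
    rw [ENNReal.ofReal_add measureReal_nonneg (by positivity),
      ENNReal.ofReal_mul ENNReal.toReal_nonneg, ofReal_measureReal, ENNReal.ofReal_toReal hfin]
  have hmom : ∀ z, 0 ≤ z → (τ + c * t) * z ^ 2 ≤ v / 2 + c * (2 * z ^ 3 / 3) := by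
    intro z hz
    have hlayer := mul_sq_le_lintegral_max_sq_add ν
      (fun s hs => hA ▸ withDensity_Ici_add_le hq hs ht) hz
    rw [← ENNReal.ofReal_toReal hfin, ← ENNReal.ofReal_mul (by positivity)] at hlayer
    rw [← ENNReal.ofReal_le_ofReal_iff (by positivity), ENNReal.ofReal_add (by positivity)
      (by positivity), ENNReal.ofReal_mul (p := c) ENNReal.toReal_nonneg]
    exact hlayer.trans (by gcongr; exact lintegral_max_sq_le_of_lintegral_sq_le ν hv)
  have hhalf' : τ + c * t ≤ 1 / 2 := by
    rw [hA, ← ENNReal.ofReal_ofNat 2, ← ENNReal.ofReal_mul zero_le_two,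
      ENNReal.ofReal_le_one] at hhalf
    linarith
  exact le_one_sub_div_sqrt_div_two measureReal_nonneg ENNReal.toReal_nonneg ht hv0 hhalf'
    (two_mul_pow_three_le_of_forall (by positivity) ENNReal.toReal_nonneg hmom)

section SignVote

variable {Ω : Type*} [MeasurableSpace Ω] {μ : Measure Ω} {X : Ω → ℝ}

lemma one_sub_two_mul_measureReal_le_integral_sign_mul_sign [IsProbabilityMeasure μ]
    (hX : Measurable X) (g : ℝ) :
    1 - 2 * μ.real {ω | g * X ω ≤ 0} ≤ μ[fun ω => Real.sign g * Real.sign (X ω)] := by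
  set E := {ω | g * X ω ≤ 0}
  have hE : MeasurableSet E := measurableSet_le (hX.const_mul g) measurable_const
  have hpt : ∀ ω, 1 - 2 * E.indicator (1 : Ω → ℝ) ω ≤ Real.sign g * Real.sign (X ω) :=
    fun ω => by
      by_cases hω : ω ∈ E
      · rw [indicator_of_mem hω, Pi.one_apply]
        linarith [(Real.sign_mul_sign_mem_Icc g (X ω)).1]
      · rw [indicator_of_notMem hω, Real.sign_mul_sign_of_mul_pos (not_le.1 hω)]
        simp
  have hint : Integrable (fun ω => Real.sign g * Real.sign (X ω)) μ :=
    (memLp_of_bounded (ae_of_all μ fun ω => Real.sign_mul_sign_mem_Icc g (X ω))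
      ((Real.measurable_sign.comp hX).const_mul _).aestronglyMeasurable 1).integrable le_rfl
  have hind : Integrable (fun ω => 2 * E.indicator (1 : Ω → ℝ) ω) μ :=
    ((integrable_const (1 : ℝ)).indicator hE).const_mul 2
  calc 1 - 2 * μ.real E = ∫ ω, (1 - 2 * E.indicator (1 : Ω → ℝ) ω) ∂μ := by
        rw [integral_sub (integrable_const 1) hind, integral_const_mul,
          integral_indicator_one hE]
        simp
    _ ≤ _ := integral_mono ((integrable_const 1).sub hind) hint hpt

lemma measureReal_mul_nonpos_eq (hX : Measurable X) {g : ℝ} (hg : g ≠ 0)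
    [(μ.map fun ω => X ω - g).IsNegInvariant] :
    μ.real {ω | g * X ω ≤ 0} = (μ.map fun ω => X ω - g).real (Ici |g|) := by
  have hXg : Measurable fun ω => X ω - g := hX.sub_const g
  rcases hg.lt_or_gt with hg | hg
  · rw [map_measureReal_apply hXg measurableSet_Ici]
    congr 1; ext ω
    simp only [mem_ofPred_eq, mem_preimage, mem_Ici, abs_of_neg hg]
    constructor <;> intro h <;> nlinarith
  · rw [← measureReal_Iic_neg, map_measureReal_apply hXg measurableSet_Iic]
    congr 1; ext ω
    simp only [mem_ofPred_eq, mem_preimage, mem_Iic, abs_of_pos hg]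
    constructor <;> intro h <;> nlinarith

lemma le_integral_sign_mul_sign [IsProbabilityMeasure μ] (hX : Measurable X)
    (hL2 : MemLp X 2 μ) {g v : ℝ} (hg : g ≠ 0) (hmean : μ[X] = g) (hvar : Var[X; μ] ≤ v)
    (huni : UnimodalSymmetric (μ.map fun ω => X ω - g)) :
    |g| / √(g ^ 2 + 6 * v) ≤ μ[fun ω => Real.sign g * Real.sign (X ω)] := by
  have hXg : Measurable fun ω => X ω - g := hX.sub_const g
  have : IsProbabilityMeasure (μ.map fun ω => X ω - g) :=
    Measure.isProbabilityMeasure_map hXg.aemeasurable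
  have := huni.isNegInvariant
  have hmom : ∫⁻ x, ENNReal.ofReal (x ^ 2) ∂(μ.map fun ω => X ω - g) ≤ ENNReal.ofReal v := by
    rw [lintegral_map (by fun_prop) hXg, ← hmean, ← evariance_eq_lintegral_ofReal,
      ← ofReal_variance hL2]
    exact ENNReal.ofReal_le_ofReal hvar
  have htail := huni.measureReal_Ici_le (abs_pos.2 hg) ((variance_nonneg X μ).trans hvar) hmom
  rw [sq_abs, ← measureReal_mul_nonpos_eq hX hg] at htail
  linarith [one_sub_two_mul_measureReal_le_integral_sign_mul_sign (μ := μ) hX g]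

end SignVote

lemma sqrt_one_sub_sq_div_eq {g v m : ℝ} (hg : g ≠ 0) (hv : 0 ≤ v) (hm : 0 < m) :
    √(1 - (|g| / √(g ^ 2 + 6 * v)) ^ 2) / (2 * (|g| / √(g ^ 2 + 6 * v)) * √m)
      = √6 / 2 * (1 / √m) * (√v / |g|) := by
  have hpos : 0 < g ^ 2 + 6 * v := by positivity
  have h : 1 - (|g| / √(g ^ 2 + 6 * v)) ^ 2 = 6 * v / (g ^ 2 + 6 * v) := by
    rw [div_pow, sq_abs, Real.sq_sqrt hpos.le]
    field_simp
    ring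
  have : 0 < √(g ^ 2 + 6 * v) := Real.sqrt_pos.2 hpos
  have : 0 < |g| := abs_pos.2 hg
  have : 0 < √m := Real.sqrt_pos.2 hm
  rw [h, Real.sqrt_div (by positivity), Real.sqrt_mul (by norm_num)]
  field_simp

theorem majority_vote_unimodal_symmetric_general
    {Ω : Type*} [MeasurableSpace Ω] (μ : Measure Ω) [IsProbabilityMeasure μ]
    (M : ℕ) (hM : 1 ≤ M) (g σ nb : ℝ) (hg : g ≠ 0) (hσ : 0 ≤ σ)
    (G : Fin M → Ω → ℝ)
    (hmeas : ∀ i, Measurable (G i))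
    (hindep : iIndepFun G μ)
    (hL2 : ∀ i, MemLp (G i) 2 μ)
    (hmean : ∀ i, ∫ ω, G i ω ∂μ = g)
    (hvar : ∀ i, variance (G i) μ ≤ σ ^ 2 / nb)
    (hunimodal : ∀ i, UnimodalSymmetric (Measure.map (fun ω => G i ω - g) μ)) :
    (μ {ω | Real.sign (∑ i, Real.sign (G i ω)) ≠ Real.sign g}).toReal
      ≤ (Real.sqrt 6 / 2) * (1 / Real.sqrt M) * (σ / (Real.sqrt nb * |g|)) := by
  have : Nonempty (Fin M) := ⟨⟨0, hM⟩⟩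
  have hv : 0 ≤ σ ^ 2 / nb := (variance_nonneg _ _).trans (hvar ⟨0, hM⟩)
  have hvote := measureReal_sum_nonpos_le (X := fun i ω => Real.sign g * Real.sign (G i ω))
    (fun i => ((Real.measurable_sign.comp (hmeas i)).const_mul _).aemeasurable)
    (fun i ω => Real.sign_mul_sign_mem_Icc _ _)
    (hindep.comp (fun _ x => Real.sign g * Real.sign x) fun _ => Real.measurable_sign.const_mul _)
    (by positivity)
    (fun i => le_integral_sign_mul_sign (hmeas i) (hL2 i) hg (hmean i) (hvar i) (hunimodal i))
  have hevent : {ω | Real.sign (∑ i, Real.sign (G i ω)) ≠ Real.sign g}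
      = {ω | ∑ i, Real.sign g * Real.sign (G i ω) ≤ 0} := by
    ext ω
    simp only [mem_ofPred_eq, Real.sign_ne_sign_iff hg, Finset.mul_sum]
  have hσv : σ / (√nb * |g|) = √(σ ^ 2 / nb) / |g| := by
    rw [Real.sqrt_div (sq_nonneg σ), Real.sqrt_sq hσ, div_div]
  rw [← measureReal_def, hevent, hσv,
    ← sqrt_one_sub_sq_div_eq hg hv (by exact_mod_cast hM)]
  rwa [Fintype.card_fin] at hvote

/-- **Majority vote improves sign reliability under unimodal symmetric noise.** Let `g ≠ 0` and,
for each of `M` workers, let `G̃⁽ᵐ⁾` be independent real random variables with mean `g`, variance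
at most `σ²/n_b`, and noise `G̃⁽ᵐ⁾ − g` unimodal and symmetric about `0`. With
`S̄ := sign(Σₘ sign(G̃⁽ᵐ⁾))` the majority vote,
`P(S̄ ≠ sign g) ≤ (√6/2) · (1/√M) · σ/(√n_b · |g|)`. -/
theorem majority_vote_unimodal_symmetric
    {Ω : Type*} [MeasurableSpace Ω] (μ : Measure Ω) [IsProbabilityMeasure μ]
    (M : ℕ) (hM : 1 ≤ M) (g σ nb : ℝ) (hg : g ≠ 0) (hσ : 0 ≤ σ) (hnb : 0 < nb)
    (G : Fin M → Ω → ℝ)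
    (hmeas : ∀ i, Measurable (G i))
    (hindep : iIndepFun G μ)
    (hL2 : ∀ i, MemLp (G i) 2 μ)
    (hmean : ∀ i, ∫ ω, G i ω ∂μ = g)
    (hvar : ∀ i, variance (G i) μ ≤ σ ^ 2 / nb)
    (hunimodal : ∀ i, UnimodalSymmetric (Measure.map (fun ω => G i ω - g) μ)) :
    (μ {ω | Real.sign (∑ i, Real.sign (G i ω)) ≠ Real.sign g}).toReal
      ≤ (Real.sqrt 6 / 2) * (1 / Real.sqrt M) * (σ / (Real.sqrt nb * |g|)) :=
  majority_vote_unimodal_symmetric_general μ M hM g σ nb hg hσ G hmeas hindep hL2 hmean hvar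
    hunimodal
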